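/- arXiv:1509.01471 — 6 statements merged into one kernel-verified Lean document; each statement's English description precedes it below -/
import Mathlib

section
/- Let L > 0 and let z : ℝ → ℝ be three times continuously differentiable on [0,L] with z(0) = z(L) = 0 and z′(L) = 0. Then ∫₀^L x · z(x) · z″′(x) dx = (3/2) ∫₀^L z′(x)² dx. -/
/-- If `z` is three times continuously differentiable on `[0,L]` with
`z(0) = z(L) = 0` and `z′(L) = 0`, then `∫₀^L x z z″′ dx = (3/2) ∫₀^L (z′)² dx`. -/
theorem integral_x_mul_thirdDeriv (L : ℝ) (hL : 0 < L) (z z₁ z₂ z₃ : ℝ → ℝ)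
    (hz₁ : ∀ x ∈ Set.Icc (0:ℝ) L, HasDerivWithinAt z (z₁ x) (Set.Icc 0 L) x)
    (hz₂ : ∀ x ∈ Set.Icc (0:ℝ) L, HasDerivWithinAt z₁ (z₂ x) (Set.Icc 0 L) x)
    (hz₃ : ∀ x ∈ Set.Icc (0:ℝ) L, HasDerivWithinAt z₂ (z₃ x) (Set.Icc 0 L) x)
    (hz₃cont : ContinuousOn z₃ (Set.Icc 0 L))
    (hbc0 : z 0 = 0) (hbcL : z L = 0) (hbc1 : z₁ L = 0) :
    ∫ x in (0:ℝ)..L, x * z x * z₃ x = (3/2) * ∫ x in (0:ℝ)..L, (z₁ x)^2 := by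
  have huIcc : Set.uIcc (0:ℝ) L = Set.Icc 0 L := Set.uIcc_of_le hL.le
  -- continuity
  have hzc : ContinuousOn z (Set.Icc 0 L) := fun x hx => (hz₁ x hx).continuousWithinAt
  have hz1c : ContinuousOn z₁ (Set.Icc 0 L) := fun x hx => (hz₂ x hx).continuousWithinAt
  have hz2c : ContinuousOn z₂ (Set.Icc 0 L) := fun x hx => (hz₃ x hx).continuousWithinAt
  have hid : ContinuousOn (fun x : ℝ => x) (Set.Icc 0 L) := continuousOn_id
  -- integrability helpers
  have intg : ∀ f : ℝ → ℝ, ContinuousOn f (Set.Icc 0 L) →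
      IntervalIntegrable f MeasureTheory.volume 0 L := by
    intro f hf
    exact (huIcc ▸ hf : ContinuousOn f (Set.uIcc 0 L)).intervalIntegrable
  -- derivative facts rephrased on uIcc
  have hz₁' : ∀ x ∈ Set.uIcc (0:ℝ) L, HasDerivWithinAt z (z₁ x) (Set.uIcc 0 L) x := by
    rw [huIcc]; exact hz₁
  have hz₂' : ∀ x ∈ Set.uIcc (0:ℝ) L, HasDerivWithinAt z₁ (z₂ x) (Set.uIcc 0 L) x := by
    rw [huIcc]; exact hz₂
  have hz₃' : ∀ x ∈ Set.uIcc (0:ℝ) L, HasDerivWithinAt z₂ (z₃ x) (Set.uIcc 0 L) x := by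
    rw [huIcc]; exact hz₃
  have hxz : ∀ x ∈ Set.uIcc (0:ℝ) L,
      HasDerivWithinAt (fun x => x * z x) (1 * z x + x * z₁ x) (Set.uIcc 0 L) x := by
    intro x hx
    exact (hasDerivWithinAt_id x _).mul (hz₁' x hx)
  have hxz1 : ∀ x ∈ Set.uIcc (0:ℝ) L,
      HasDerivWithinAt (fun x => x * z₁ x) (1 * z₁ x + x * z₂ x) (Set.uIcc 0 L) x := by
    intro x hx
    exact (hasDerivWithinAt_id x _).mul (hz₂' x hx)
  -- IBP #1 : ∫ (z + x z₁) z₂ + (x z) z₃ = L z(L) z₂(L) - 0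
  have A := intervalIntegral.integral_deriv_mul_eq_sub_of_hasDerivWithinAt
    (u := fun x => x * z x) (v := z₂) (u' := fun x => 1 * z x + x * z₁ x) (v' := z₃)
    hxz hz₃'
    (intg _ (((continuous_const.continuousOn.mul hzc).add (hid.mul hz1c))))
    (intg _ hz₃cont)
  -- IBP #2 : ∫ z₁ z₁ + z z₂ = z(L) z₁(L) - z(0) z₁(0)
  have B := intervalIntegral.integral_deriv_mul_eq_sub_of_hasDerivWithinAt
    (u := z) (v := z₁) (u' := z₁) (v' := z₂) hz₁' hz₂' (intg _ hz1c) (intg _ hz2c)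
  -- IBP #3 : ∫ (z₁ + x z₂) z₁ + (x z₁) z₂ = L z₁(L)² - 0
  have C := intervalIntegral.integral_deriv_mul_eq_sub_of_hasDerivWithinAt
    (u := fun x => x * z₁ x) (v := z₁) (u' := fun x => 1 * z₁ x + x * z₂ x) (v' := z₂)
    hxz1 hz₂'
    (intg _ (((continuous_const.continuousOn.mul hz1c).add (hid.mul hz2c))))
    (intg _ hz2c)
  simp only [hbcL, hbc0, hbc1, one_mul, mul_zero, zero_mul, sub_zero, sub_self] at A B C
  -- integrability of the individual pieces
  have i0 : IntervalIntegrable (fun x => (z₁ x)^2) MeasureTheory.volume 0 L :=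
    intg _ (hz1c.pow 2)
  have i1 : IntervalIntegrable (fun x => z x * z₂ x) MeasureTheory.volume 0 L :=
    intg _ (hzc.mul hz2c)
  have i2 : IntervalIntegrable (fun x => x * z₁ x * z₂ x) MeasureTheory.volume 0 L :=
    intg _ ((hid.mul hz1c).mul hz2c)
  have i3 : IntervalIntegrable (fun x => x * z x * z₃ x) MeasureTheory.volume 0 L :=
    intg _ ((hid.mul hzc).mul hz₃cont)
  have A' : ((∫ x in (0:ℝ)..L, z x * z₂ x) + ∫ x in (0:ℝ)..L, x * z₁ x * z₂ x)
      + (∫ x in (0:ℝ)..L, x * z x * z₃ x) = 0 := by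
    rw [← intervalIntegral.integral_add i1 i2, ← intervalIntegral.integral_add (i1.add i2) i3]
    refine Eq.trans ?_ A
    exact intervalIntegral.integral_congr fun x _ => by ring
  have B' : (∫ x in (0:ℝ)..L, (z₁ x)^2) + (∫ x in (0:ℝ)..L, z x * z₂ x) = 0 := by
    rw [← intervalIntegral.integral_add i0 i1]
    refine Eq.trans ?_ B
    exact intervalIntegral.integral_congr fun x _ => by ring
  have C' : (∫ x in (0:ℝ)..L, (z₁ x)^2) + 2 * (∫ x in (0:ℝ)..L, x * z₁ x * z₂ x) = 0 := by
    rw [two_mul, ← intervalIntegral.integral_add i2 i2,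
      ← intervalIntegral.integral_add i0 (i2.add i2)]
    refine Eq.trans ?_ C
    exact intervalIntegral.integral_congr fun x _ => by ring
  linarith
end

section
/- Let L > 0, a > 0 and u₀ > 0. For all functions u, ũ : ℝ → ℂ that are three times continuously differentiable on [0,L] and satisfy u(0) = u(L) = 0, u′(L) = 0, ũ(0) = ũ(L) = 0, ũ′(L) = 0, one has Re ∫₀^L (Au(x) − Aũ(x)) · conj(u(x) − ũ(x)) dx ≤ 0, where Au := −u″′ − u′ − a·sat_ℂ(u). In other words, the Korteweg–de Vries operator with saturated feedback is dissipative on such functions. -/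
/-- The saturation function with level `u₀`. -/
noncomputable def sat (u₀ s : ℝ) : ℝ :=
  if s < -u₀ then -u₀ else if s ≤ u₀ then s else u₀

/-- The complex saturation function: `sat_ℂ(s) = sat(Re s) + i·sat(Im s)`. -/
noncomputable def satC (u₀ : ℝ) (s : ℂ) : ℂ :=
  (sat u₀ s.re : ℂ) + (sat u₀ s.im : ℂ) * Complex.I

/-!
Write `w = u - ũ`. The integrand splits into `-(w‴ + w′) · conj w` and
`-a · (sat_ℂ u - sat_ℂ ũ) · conj w`. Integration by parts and the boundary conditions give
`Re ∫ w′ conj w = (|w L|² - |w 0|²) / 2 = 0` and `Re ∫ w‴ conj w = |w′ 0|² / 2 ≥ 0`, while the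
saturation term is pointwise nonnegative because `sat` is monotone and `sat_ℂ` acts componentwise.
-/

open Set MeasureTheory ComplexConjugate
open scoped Interval

theorem sat_eq_max_min {u₀ : ℝ} (hu₀ : 0 ≤ u₀) (s : ℝ) : sat u₀ s = max (-u₀) (min s u₀) := by
  unfold sat
  split_ifs <;> simp only [max_def, min_def] <;> split_ifs <;> linarith

theorem continuous_sat {u₀ : ℝ} (hu₀ : 0 ≤ u₀) : Continuous (sat u₀) := by
  simp only [funext (sat_eq_max_min hu₀)]
  fun_prop

theorem monotone_sat {u₀ : ℝ} (hu₀ : 0 ≤ u₀) : Monotone (sat u₀) := fun s t hst => by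
  simp only [sat_eq_max_min hu₀]
  gcongr

theorem continuous_satC {u₀ : ℝ} (hu₀ : 0 ≤ u₀) : Continuous (satC u₀) := by
  have := continuous_sat hu₀
  unfold satC
  fun_prop

theorem re_satC_sub_mul_conj_sub_nonneg {u₀ : ℝ} (hu₀ : 0 ≤ u₀) (p q : ℂ) :
    0 ≤ ((satC u₀ p - satC u₀ q) * conj (p - q)).re := by
  have hmono := monovary_id_iff.2 (monotone_sat hu₀)
  have hre := monovary_iff_forall_mul_nonneg.1 hmono q.re p.re
  have him := monovary_iff_forall_mul_nonneg.1 hmono q.im p.im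
  simp only [satC, Complex.mul_re, Complex.mul_im, Complex.sub_re, Complex.sub_im,
    Complex.add_re, Complex.add_im, Complex.conj_re, Complex.conj_im, Complex.ofReal_re,
    Complex.ofReal_im, Complex.I_re, Complex.I_im, id] at hre him ⊢
  linarith

section IntervalIntegral

variable {a b : ℝ} {f f' g g' : ℝ → ℂ}

theorem intervalIntegral_complex_re (hf : IntervalIntegrable f volume a b) :
    ∫ x in a..b, (f x).re = (∫ x in a..b, f x).re :=
  intervalIntegral.intervalIntegral_re hf

theorem re_integral_neg_sub_ofReal_mul (hf : IntervalIntegrable f volume a b)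
    (hg : IntervalIntegrable g volume a b) (c : ℝ) :
    (∫ x in a..b, -f x - c * g x).re = -(∫ x in a..b, (f x).re) - c * ∫ x in a..b, (g x).re := by
  rw [intervalIntegral.integral_sub (f := fun x => -f x) hf.neg (hg.const_mul _),
    intervalIntegral.integral_neg, intervalIntegral.integral_const_mul,
    intervalIntegral_complex_re hf, intervalIntegral_complex_re hg]
  simp

theorem integral_deriv_mul_conj_add_mul_conj_deriv
    (hf : ∀ x ∈ [[a, b]], HasDerivWithinAt f (f' x) [[a, b]] x)
    (hg : ∀ x ∈ [[a, b]], HasDerivWithinAt g (g' x) [[a, b]] x)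
    (hf' : ContinuousOn f' [[a, b]]) (hg' : ContinuousOn g' [[a, b]]) :
    ∫ x in a..b, f' x * conj (g x) + f x * conj (g' x) = f b * conj (g b) - f a * conj (g a) :=
  intervalIntegral.integral_deriv_mul_eq_sub_of_hasDerivWithinAt hf (fun x hx => (hg x hx).star)
    hf'.intervalIntegrable (Complex.continuous_conj.comp_continuousOn hg').intervalIntegrable

theorem integral_re_deriv_mul_conj
    (hf : ∀ x ∈ [[a, b]], HasDerivWithinAt f (f' x) [[a, b]] x) (hf' : ContinuousOn f' [[a, b]]) :
    ∫ x in a..b, (f' x * conj (f x)).re = (‖f b‖ ^ 2 - ‖f a‖ ^ 2) / 2 := by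
  have hcont : ContinuousOn f [[a, b]] := fun x hx => (hf x hx).continuousWithinAt
  have hint : IntervalIntegrable (fun x => f' x * conj (f x) + f x * conj (f' x)) volume a b := by
    apply ContinuousOn.intervalIntegrable; fun_prop
  have hre : ∀ x, (f' x * conj (f x) + f x * conj (f' x)).re = 2 * (f' x * conj (f x)).re := by
    intro x; simp only [Complex.add_re, Complex.mul_re, Complex.conj_re, Complex.conj_im]; ring
  calc ∫ x in a..b, (f' x * conj (f x)).re
      = 2⁻¹ * ∫ x in a..b, (f' x * conj (f x) + f x * conj (f' x)).re := by
        simp only [hre, intervalIntegral.integral_const_mul]; ring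
    _ = 2⁻¹ * (f b * conj (f b) - f a * conj (f a)).re := by
        rw [← integral_deriv_mul_conj_add_mul_conj_deriv hf hf hf' hf',
          intervalIntegral_complex_re hint]
    _ = (‖f b‖ ^ 2 - ‖f a‖ ^ 2) / 2 := by
        simp only [Complex.mul_conj, ← Complex.ofReal_sub, Complex.ofReal_re,
          Complex.normSq_eq_norm_sq]
        ring

theorem integral_re_third_deriv_mul_conj {f₁ f₂ f₃ : ℝ → ℂ}
    (hf : ∀ x ∈ [[a, b]], HasDerivWithinAt f (f₁ x) [[a, b]] x)
    (hf₁ : ∀ x ∈ [[a, b]], HasDerivWithinAt f₁ (f₂ x) [[a, b]] x)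
    (hf₂ : ∀ x ∈ [[a, b]], HasDerivWithinAt f₂ (f₃ x) [[a, b]] x)
    (hf₃ : ContinuousOn f₃ [[a, b]]) :
    ∫ x in a..b, (f₃ x * conj (f x)).re =
      (f₂ b * conj (f b)).re - (f₂ a * conj (f a)).re - (‖f₁ b‖ ^ 2 - ‖f₁ a‖ ^ 2) / 2 := by
  have hcont : ContinuousOn f [[a, b]] := fun x hx => (hf x hx).continuousWithinAt
  have hcont₁ : ContinuousOn f₁ [[a, b]] := fun x hx => (hf₁ x hx).continuousWithinAt
  have hcont₂ : ContinuousOn f₂ [[a, b]] := fun x hx => (hf₂ x hx).continuousWithinAt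
  have hint : IntervalIntegrable (fun x => f₃ x * conj (f x) + f₂ x * conj (f₁ x)) volume a b := by
    apply ContinuousOn.intervalIntegrable; fun_prop
  have hint₃ : IntervalIntegrable (fun x => (f₃ x * conj (f x)).re) volume a b := by
    apply ContinuousOn.intervalIntegrable; fun_prop
  have hint₂ : IntervalIntegrable (fun x => (f₂ x * conj (f₁ x)).re) volume a b := by
    apply ContinuousOn.intervalIntegrable; fun_prop
  have hparts := intervalIntegral_complex_re hint
  rw [integral_deriv_mul_conj_add_mul_conj_deriv hf₂ hf hf₃ hcont₁] at hparts
  simp only [Complex.add_re] at hparts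
  rw [intervalIntegral.integral_add hint₃ hint₂, integral_re_deriv_mul_conj hf₁ hcont₂,
    Complex.sub_re] at hparts
  linarith

theorem integral_re_third_deriv_add_deriv_mul_conj {f₁ f₂ f₃ : ℝ → ℂ}
    (hf : ∀ x ∈ [[a, b]], HasDerivWithinAt f (f₁ x) [[a, b]] x)
    (hf₁ : ∀ x ∈ [[a, b]], HasDerivWithinAt f₁ (f₂ x) [[a, b]] x)
    (hf₂ : ∀ x ∈ [[a, b]], HasDerivWithinAt f₂ (f₃ x) [[a, b]] x)
    (hf₃ : ContinuousOn f₃ [[a, b]]) (hfa : f a = 0) (hfb : f b = 0) (hf₁b : f₁ b = 0) :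
    ∫ x in a..b, ((f₃ x + f₁ x) * conj (f x)).re = ‖f₁ a‖ ^ 2 / 2 := by
  have hcont : ContinuousOn f [[a, b]] := fun x hx => (hf x hx).continuousWithinAt
  have hcont₁ : ContinuousOn f₁ [[a, b]] := fun x hx => (hf₁ x hx).continuousWithinAt
  have hint₃ : IntervalIntegrable (fun x => (f₃ x * conj (f x)).re) volume a b := by
    apply ContinuousOn.intervalIntegrable; fun_prop
  have hint₁ : IntervalIntegrable (fun x => (f₁ x * conj (f x)).re) volume a b := by
    apply ContinuousOn.intervalIntegrable; fun_prop
  simp only [add_mul, Complex.add_re]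
  rw [intervalIntegral.integral_add hint₃ hint₁, integral_re_third_deriv_mul_conj hf hf₁ hf₂ hf₃,
    integral_re_deriv_mul_conj hf hcont₁, hfa, hfb, hf₁b]
  simp only [map_zero, mul_zero, Complex.zero_re, norm_zero]
  ring

end IntervalIntegral

/-- Dissipativity of the saturated Korteweg–de Vries operator
`Au = −u″′ − u′ − a·sat_ℂ(u)`: for all three times continuously differentiable
functions `u, v` on `[0,L]` satisfying the boundary conditions
`u(0) = u(L) = u′(L) = 0` and `v(0) = v(L) = v′(L) = 0`, one has
`Re ∫₀^L (Au − Av) ⬝ conj(u − v) ≤ 0`. -/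
theorem kdv_sat_operator_dissipative (L a u₀ : ℝ)
    (hL : 0 < L) (ha : 0 < a) (hu₀ : 0 < u₀)
    (u u₁ u₂ u₃ v v₁ v₂ v₃ : ℝ → ℂ)
    (hu₁ : ∀ x ∈ Set.Icc (0:ℝ) L, HasDerivWithinAt u (u₁ x) (Set.Icc 0 L) x)
    (hu₂ : ∀ x ∈ Set.Icc (0:ℝ) L, HasDerivWithinAt u₁ (u₂ x) (Set.Icc 0 L) x)
    (hu₃ : ∀ x ∈ Set.Icc (0:ℝ) L, HasDerivWithinAt u₂ (u₃ x) (Set.Icc 0 L) x)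
    (hu₃cont : ContinuousOn u₃ (Set.Icc 0 L))
    (hv₁ : ∀ x ∈ Set.Icc (0:ℝ) L, HasDerivWithinAt v (v₁ x) (Set.Icc 0 L) x)
    (hv₂ : ∀ x ∈ Set.Icc (0:ℝ) L, HasDerivWithinAt v₁ (v₂ x) (Set.Icc 0 L) x)
    (hv₃ : ∀ x ∈ Set.Icc (0:ℝ) L, HasDerivWithinAt v₂ (v₃ x) (Set.Icc 0 L) x)
    (hv₃cont : ContinuousOn v₃ (Set.Icc 0 L))
    (hubc0 : u 0 = 0) (hubcL : u L = 0) (hubc1 : u₁ L = 0)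
    (hvbc0 : v 0 = 0) (hvbcL : v L = 0) (hvbc1 : v₁ L = 0) :
    (∫ x in (0:ℝ)..L,
        ((-u₃ x - u₁ x - a * satC u₀ (u x)) - (-v₃ x - v₁ x - a * satC u₀ (v x)))
          * (starRingEnd ℂ) (u x - v x)).re ≤ 0 := by
  rw [← uIcc_of_le hL.le] at hu₁ hu₂ hu₃ hu₃cont hv₁ hv₂ hv₃ hv₃cont
  have hw : ∀ x ∈ [[0, L]], HasDerivWithinAt (fun x => u x - v x) (u₁ x - v₁ x) [[0, L]] x :=
    fun x hx => (hu₁ x hx).sub (hv₁ x hx)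
  have hw₁ : ∀ x ∈ [[0, L]], HasDerivWithinAt (fun x => u₁ x - v₁ x) (u₂ x - v₂ x) [[0, L]] x :=
    fun x hx => (hu₂ x hx).sub (hv₂ x hx)
  have hw₂ : ∀ x ∈ [[0, L]], HasDerivWithinAt (fun x => u₂ x - v₂ x) (u₃ x - v₃ x) [[0, L]] x :=
    fun x hx => (hu₃ x hx).sub (hv₃ x hx)
  have hw₃ : ContinuousOn (fun x => u₃ x - v₃ x) [[0, L]] := hu₃cont.sub hv₃cont
  have hlin := integral_re_third_deriv_add_deriv_mul_conj hw hw₁ hw₂ hw₃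
    (by simp [hubc0, hvbc0]) (by simp [hubcL, hvbcL]) (by simp [hubc1, hvbc1])
  have hdiss : 0 ≤ ∫ x in (0:ℝ)..L, ((satC u₀ (u x) - satC u₀ (v x)) * conj (u x - v x)).re :=
    intervalIntegral.integral_nonneg hL.le fun x _ => re_satC_sub_mul_conj_sub_nonneg hu₀.le _ _
  have hF : ∀ x, ((-u₃ x - u₁ x - a * satC u₀ (u x)) - (-v₃ x - v₁ x - a * satC u₀ (v x)))
      * conj (u x - v x) = -(((u₃ x - v₃ x) + (u₁ x - v₁ x)) * conj (u x - v x))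
        - a * ((satC u₀ (u x) - satC u₀ (v x)) * conj (u x - v x)) := fun x => by ring
  have hcu : ContinuousOn u [[0, L]] := fun x hx => (hu₁ x hx).continuousWithinAt
  have hcv : ContinuousOn v [[0, L]] := fun x hx => (hv₁ x hx).continuousWithinAt
  have hcu₁ : ContinuousOn u₁ [[0, L]] := fun x hx => (hu₂ x hx).continuousWithinAt
  have hcv₁ : ContinuousOn v₁ [[0, L]] := fun x hx => (hv₂ x hx).continuousWithinAt
  have hsatu := (continuous_satC hu₀.le).comp_continuousOn hcu
  have hsatv := (continuous_satC hu₀.le).comp_continuousOn hcv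
  rw [intervalIntegral.integral_congr fun x _ => hF x, re_integral_neg_sub_ofReal_mul
    (ContinuousOn.intervalIntegrable (by fun_prop)) (ContinuousOn.intervalIntegrable (by fun_prop)),
    hlin]
  nlinarith [mul_nonneg ha.le hdiss]
end

section
/- Let L > 0 and λ̃ > 0. If z : ℝ → ℝ is three times continuously differentiable on [0,L], satisfies z(0) = z(L) = 0 and z′(L) = 0, and satisfies λ̃·z(x) + z″′(x) + z′(x) = 0 for all x ∈ [0,L], then z(x) = 0 for all x ∈ [0,L]. -/
/-!
Multiplying the equation by `z` gives the energy identity `E' = -λ̃ z²` for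
`E = z z″ - z′² / 2 + z² / 2`. So `E` is antitone on `[0,L]`, while the boundary conditions give
`E(0) = -z′(0)² / 2 ≤ 0 = E(L)`. Hence `E` is constant, `λ̃ z² = -E' = 0`, and `z ≡ 0`.
-/

open Set

theorem AntitoneOn.eq_left_of_le {f : ℝ → ℝ} {a b : ℝ} (hf : AntitoneOn f (Icc a b))
    (hab : f a ≤ f b) {x : ℝ} (hx : x ∈ Icc a b) : f x = f a := by
  have ha : a ∈ Icc a b := ⟨le_rfl, hx.1.trans hx.2⟩
  have hb : b ∈ Icc a b := ⟨hx.1.trans hx.2, le_rfl⟩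
  have hxa := hf ha hx hx.1
  have hbx := hf hx hb hx.2
  linarith

theorem eq_zero_of_hasDerivWithinAt_nonpos_of_le {f f' : ℝ → ℝ} {a b : ℝ} (hab : a < b)
    (hf : ∀ x ∈ Icc a b, HasDerivWithinAt f (f' x) (Icc a b) x)
    (hf' : ∀ x ∈ Icc a b, f' x ≤ 0) (hfab : f a ≤ f b) :
    ∀ x ∈ Icc a b, f' x = 0 := by
  have hanti : AntitoneOn f (Icc a b) :=
    antitoneOn_of_hasDerivWithinAt_nonpos (convex_Icc a b)
      (fun x hx => (hf x hx).continuousWithinAt)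
      (fun x hx => (hf x (interior_subset hx)).mono interior_subset)
      (fun x hx => hf' x (interior_subset hx))
  intro x hx
  have hconst : HasDerivWithinAt f 0 (Icc a b) x :=
    (hasDerivWithinAt_const x _ (f a)).congr (fun y hy => hanti.eq_left_of_le hfab hy)
      (hanti.eq_left_of_le hfab hx)
  exact (uniqueDiffOn_Icc hab x hx).eq_deriv _ (hf x hx) hconst

/-- The energy of the linear KdV operator, with `z₁`, `z₂` standing for `z′`, `z″`. -/
noncomputable def kdvEnergy (z z₁ z₂ : ℝ → ℝ) (x : ℝ) : ℝ :=
  z x * z₂ x - z₁ x ^ 2 / 2 + z x ^ 2 / 2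

theorem hasDerivWithinAt_kdvEnergy {z z₁ z₂ : ℝ → ℝ} {z₃ lam x : ℝ} {s : Set ℝ}
    (hz₁ : HasDerivWithinAt z (z₁ x) s x) (hz₂ : HasDerivWithinAt z₁ (z₂ x) s x)
    (hz₃ : HasDerivWithinAt z₂ z₃ s x) (heq : lam * z x + z₃ + z₁ x = 0) :
    HasDerivWithinAt (kdvEnergy z z₁ z₂) (-(lam * z x ^ 2)) s x := by
  have h := ((hz₁.mul hz₃).sub ((hz₂.pow 2).div_const 2)).add ((hz₁.pow 2).div_const 2)
  refine h.congr_deriv ?_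
  linear_combination (z x) * heq

theorem kdv_no_positive_eigenvalue_general (L lam : ℝ) (hL : 0 < L) (hlam : 0 < lam)
    (z z₁ z₂ z₃ : ℝ → ℝ)
    (hz₁ : ∀ x ∈ Set.Icc (0:ℝ) L, HasDerivWithinAt z (z₁ x) (Set.Icc 0 L) x)
    (hz₂ : ∀ x ∈ Set.Icc (0:ℝ) L, HasDerivWithinAt z₁ (z₂ x) (Set.Icc 0 L) x)
    (hz₃ : ∀ x ∈ Set.Icc (0:ℝ) L, HasDerivWithinAt z₂ (z₃ x) (Set.Icc 0 L) x)
    (hbc0 : z 0 = 0) (hbcL : z L = 0) (hbc1 : z₁ L = 0)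
    (heq : ∀ x ∈ Set.Icc (0:ℝ) L, lam * z x + z₃ x + z₁ x = 0) :
    ∀ x ∈ Set.Icc (0:ℝ) L, z x = 0 := by
  have hE : ∀ x ∈ Icc 0 L,
      HasDerivWithinAt (kdvEnergy z z₁ z₂) (-(lam * z x ^ 2)) (Icc 0 L) x := fun x hx =>
    hasDerivWithinAt_kdvEnergy (hz₁ x hx) (hz₂ x hx) (hz₃ x hx) (heq x hx)
  have hE_boundary : kdvEnergy z z₁ z₂ 0 ≤ kdvEnergy z z₁ z₂ L := by
    simp only [kdvEnergy, hbc0, hbcL, hbc1]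
    nlinarith [sq_nonneg (z₁ 0)]
  have hE' := eq_zero_of_hasDerivWithinAt_nonpos_of_le hL hE
    (fun x _ => neg_nonpos.2 (by positivity)) hE_boundary
  intro x hx
  have hzx : lam * z x ^ 2 = 0 := neg_eq_zero.1 (hE' x hx)
  simpa [hlam.ne'] using hzx

/-- A positive real number `λ̃` is not an eigenvalue of the linear
Korteweg–de Vries operator: if `z` is three times continuously differentiable
on `[0,L]`, satisfies `z(0) = z(L) = z′(L) = 0` and
`λ̃ z + z″′ + z′ = 0` on `[0,L]`, then `z ≡ 0` on `[0,L]`. -/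
theorem kdv_no_positive_eigenvalue (L lam : ℝ) (hL : 0 < L) (hlam : 0 < lam)
    (z z₁ z₂ z₃ : ℝ → ℝ)
    (hz₁ : ∀ x ∈ Set.Icc (0:ℝ) L, HasDerivWithinAt z (z₁ x) (Set.Icc 0 L) x)
    (hz₂ : ∀ x ∈ Set.Icc (0:ℝ) L, HasDerivWithinAt z₁ (z₂ x) (Set.Icc 0 L) x)
    (hz₃ : ∀ x ∈ Set.Icc (0:ℝ) L, HasDerivWithinAt z₂ (z₃ x) (Set.Icc 0 L) x)
    (hz₃cont : ContinuousOn z₃ (Set.Icc 0 L))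
    (hbc0 : z 0 = 0) (hbcL : z L = 0) (hbc1 : z₁ L = 0)
    (heq : ∀ x ∈ Set.Icc (0:ℝ) L, lam * z x + z₃ x + z₁ x = 0) :
    ∀ x ∈ Set.Icc (0:ℝ) L, z x = 0 :=
  kdv_no_positive_eigenvalue_general L lam hL hlam z z₁ z₂ z₃ hz₁ hz₂ hz₃ hbc0 hbcL hbc1 heq
end

section
/- Let L > 0, λ̃ > 0 and let g : [0,L] → ℝ be continuous. If z : ℝ → ℝ is three times continuously differentiable on [0,L], satisfies z(0) = z(L) = 0 and z′(L) = 0, and satisfies λ̃·z(x) + z″′(x) + z′(x) = g(x) for all x ∈ [0,L], then λ̃ · ‖z‖_{L²(0,L)} ≤ ‖g‖_{L²(0,L)}. -/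
/-!
Testing the equation against `z` gives `∫ g z = λ̃ ∫ z² + ∫ (z″′ + z′) z`. The last integral is the
increment across `[0, L]` of the flux `z z″ - z′²/2 + z²/2`, which by the boundary conditions is
`z′(0)²/2 ≥ 0`. Hence `λ̃ ‖z‖² ≤ ∫ g z ≤ ‖g‖ ‖z‖` by Cauchy–Schwarz.
-/

open MeasureTheory Set

theorem sq_integral_mul_le_integral_sq_mul_integral_sq {α : Type*} [MeasurableSpace α]
    {μ : Measure α} {f g : α → ℝ} (hf : Integrable (fun x => f x ^ 2) μ)
    (hg : Integrable (fun x => g x ^ 2) μ) (hfg : Integrable (fun x => f x * g x) μ) :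
    (∫ x, f x * g x ∂μ) ^ 2 ≤ (∫ x, f x ^ 2 ∂μ) * ∫ x, g x ^ 2 ∂μ := by
  have hquad : ∀ t : ℝ, 0 ≤ (∫ x, f x ^ 2 ∂μ) * (t * t) + 2 * (∫ x, f x * g x ∂μ) * t
      + ∫ x, g x ^ 2 ∂μ := fun t => calc
    0 ≤ ∫ x, (t * f x + g x) ^ 2 ∂μ := integral_nonneg fun x => sq_nonneg _
    _ = ∫ x, (t * t * f x ^ 2 + 2 * t * (f x * g x) + g x ^ 2) ∂μ := by congr 1; ext x; ring
    _ = _ := by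
      have hfg' : Integrable (fun x => t * t * f x ^ 2 + 2 * t * (f x * g x)) μ :=
        (hf.const_mul _).add (hfg.const_mul _)
      rw [integral_add hfg' hg,
        integral_add (hf.const_mul _) (hfg.const_mul _), integral_const_mul, integral_const_mul]
      ring
  have hdisc := discrim_le_zero hquad
  rw [discrim] at hdisc
  nlinarith

theorem intervalIntegral.sq_integral_mul_le_integral_sq_mul_integral_sq {a b : ℝ} (hab : a ≤ b)
    {f g : ℝ → ℝ} (hf : IntervalIntegrable (fun x => f x ^ 2) volume a b)
    (hg : IntervalIntegrable (fun x => g x ^ 2) volume a b)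
    (hfg : IntervalIntegrable (fun x => f x * g x) volume a b) :
    (∫ x in a..b, f x * g x) ^ 2 ≤ (∫ x in a..b, f x ^ 2) * ∫ x in a..b, g x ^ 2 := by
  simp only [intervalIntegral.integral_of_le hab]
  exact _root_.sq_integral_mul_le_integral_sq_mul_integral_sq hf.1 hg.1 hfg.1

noncomputable def kdvFlux (z z₁ z₂ : ℝ → ℝ) (x : ℝ) : ℝ := z x * z₂ x - z₁ x ^ 2 / 2 + z x ^ 2 / 2

section Flux

variable {z z₁ z₂ z₃ : ℝ → ℝ}

theorem hasDerivWithinAt_kdvFlux {s : Set ℝ} {x : ℝ} (hz₁ : HasDerivWithinAt z (z₁ x) s x)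
    (hz₂ : HasDerivWithinAt z₁ (z₂ x) s x) (hz₃ : HasDerivWithinAt z₂ (z₃ x) s x) :
    HasDerivWithinAt (kdvFlux z z₁ z₂) ((z₃ x + z₁ x) * z x) s x := by
  refine (((hz₁.mul hz₃).sub ((hz₂.pow 2).div_const 2)).add
    ((hz₁.pow 2).div_const 2)).congr_deriv ?_
  norm_num
  ring

variable {a b : ℝ}

theorem integral_kdv_mul_self_eq_kdvFlux_sub (hab : a ≤ b)
    (hz₁ : ∀ x ∈ Icc a b, HasDerivWithinAt z (z₁ x) (Icc a b) x)
    (hz₂ : ∀ x ∈ Icc a b, HasDerivWithinAt z₁ (z₂ x) (Icc a b) x)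
    (hz₃ : ∀ x ∈ Icc a b, HasDerivWithinAt z₂ (z₃ x) (Icc a b) x)
    (hz₃cont : ContinuousOn z₃ (Icc a b)) :
    ∫ x in a..b, (z₃ x + z₁ x) * z x = kdvFlux z z₁ z₂ b - kdvFlux z z₁ z₂ a := by
  have hflux x (hx : x ∈ Icc a b) := hasDerivWithinAt_kdvFlux (hz₁ x hx) (hz₂ x hx) (hz₃ x hx)
  have hzc : ContinuousOn z (Icc a b) := fun x hx => (hz₁ x hx).continuousWithinAt
  have hz₁c : ContinuousOn z₁ (Icc a b) := fun x hx => (hz₂ x hx).continuousWithinAt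
  refine intervalIntegral.integral_eq_sub_of_hasDeriv_right_of_le hab
    (fun x hx => (hflux x hx).continuousWithinAt) (fun x hx => ?_)
    (((hz₃cont.add hz₁c).mul hzc).intervalIntegrable_of_Icc hab)
  exact ((hflux x (Ioo_subset_Icc_self hx)).hasDerivAt (Icc_mem_nhds hx.1 hx.2)).hasDerivWithinAt

theorem integral_kdv_mul_self_nonneg (hab : a ≤ b)
    (hz₁ : ∀ x ∈ Icc a b, HasDerivWithinAt z (z₁ x) (Icc a b) x)
    (hz₂ : ∀ x ∈ Icc a b, HasDerivWithinAt z₁ (z₂ x) (Icc a b) x)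
    (hz₃ : ∀ x ∈ Icc a b, HasDerivWithinAt z₂ (z₃ x) (Icc a b) x)
    (hz₃cont : ContinuousOn z₃ (Icc a b)) (hza : z a = 0) (hzb : z b = 0) (hz₁b : z₁ b = 0) :
    0 ≤ ∫ x in a..b, (z₃ x + z₁ x) * z x := by
  rw [integral_kdv_mul_self_eq_kdvFlux_sub hab hz₁ hz₂ hz₃ hz₃cont]
  simp only [kdvFlux, hza, hzb, hz₁b]
  linarith [sq_nonneg (z₁ a)]

theorem mul_integral_sq_le_integral_mul_of_kdv_resolvent {lam : ℝ} {g : ℝ → ℝ} (hab : a ≤ b)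
    (hz₁ : ∀ x ∈ Icc a b, HasDerivWithinAt z (z₁ x) (Icc a b) x)
    (hz₂ : ∀ x ∈ Icc a b, HasDerivWithinAt z₁ (z₂ x) (Icc a b) x)
    (hz₃ : ∀ x ∈ Icc a b, HasDerivWithinAt z₂ (z₃ x) (Icc a b) x)
    (hz₃cont : ContinuousOn z₃ (Icc a b)) (hza : z a = 0) (hzb : z b = 0) (hz₁b : z₁ b = 0)
    (heq : ∀ x ∈ Icc a b, lam * z x + z₃ x + z₁ x = g x) :
    lam * ∫ x in a..b, z x ^ 2 ≤ ∫ x in a..b, g x * z x := by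
  have hzc : ContinuousOn z (Icc a b) := fun x hx => (hz₁ x hx).continuousWithinAt
  have hz₁c : ContinuousOn z₁ (Icc a b) := fun x hx => (hz₂ x hx).continuousWithinAt
  have htested : ∫ x in a..b, g x * z x
      = lam * (∫ x in a..b, z x ^ 2) + ∫ x in a..b, (z₃ x + z₁ x) * z x := by
    rw [← intervalIntegral.integral_const_mul, ← intervalIntegral.integral_add
      (f := fun x => lam * z x ^ 2) (g := fun x => (z₃ x + z₁ x) * z x)
      ((hzc.pow 2).intervalIntegrable_of_Icc hab |>.const_mul lam)
      (((hz₃cont.add hz₁c).mul hzc).intervalIntegrable_of_Icc hab)]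
    refine intervalIntegral.integral_congr fun x hx => ?_
    rw [uIcc_of_le hab] at hx
    simp only [← heq x hx]
    ring
  linarith [integral_kdv_mul_self_nonneg hab hz₁ hz₂ hz₃ hz₃cont hza hzb hz₁b]

end Flux

theorem mul_sqrt_le_sqrt_of_mul_le_of_sq_le_mul {lam A B I : ℝ} (hlam : 0 ≤ lam) (hA : 0 ≤ A)
    (hI : lam * A ≤ I) (hIsq : I ^ 2 ≤ B * A) : lam * √A ≤ √B := by
  rcases hA.eq_or_lt with rfl | hA
  · simp
  have hsq : (lam * A) ^ 2 ≤ B * A := (pow_le_pow_left₀ (by positivity) hI 2).trans hIsq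
  rw [← Real.sqrt_sq hlam, ← Real.sqrt_mul (sq_nonneg _)]
  exact Real.sqrt_le_sqrt (le_of_mul_le_mul_right (by nlinarith) hA)

/-- If `z` is three times continuously differentiable on `[0,L]`, satisfies
`z(0) = z(L) = z′(L) = 0` and `λ̃ z + z″′ + z′ = g` on `[0,L]` with `g`
continuous and `λ̃ > 0`, then `λ̃ ‖z‖_{L²(0,L)} ≤ ‖g‖_{L²(0,L)}`. -/
theorem kdv_resolvent_L2_bound (L lam : ℝ) (hL : 0 < L) (hlam : 0 < lam)
    (g : ℝ → ℝ) (hg : ContinuousOn g (Set.Icc 0 L))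
    (z z₁ z₂ z₃ : ℝ → ℝ)
    (hz₁ : ∀ x ∈ Set.Icc (0:ℝ) L, HasDerivWithinAt z (z₁ x) (Set.Icc 0 L) x)
    (hz₂ : ∀ x ∈ Set.Icc (0:ℝ) L, HasDerivWithinAt z₁ (z₂ x) (Set.Icc 0 L) x)
    (hz₃ : ∀ x ∈ Set.Icc (0:ℝ) L, HasDerivWithinAt z₂ (z₃ x) (Set.Icc 0 L) x)
    (hz₃cont : ContinuousOn z₃ (Set.Icc 0 L))
    (hbc0 : z 0 = 0) (hbcL : z L = 0) (hbc1 : z₁ L = 0)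
    (heq : ∀ x ∈ Set.Icc (0:ℝ) L, lam * z x + z₃ x + z₁ x = g x) :
    lam * Real.sqrt (∫ x in (0:ℝ)..L, (z x)^2)
      ≤ Real.sqrt (∫ x in (0:ℝ)..L, (g x)^2) := by
  have hzc : ContinuousOn z (Icc 0 L) := fun x hx => (hz₁ x hx).continuousWithinAt
  have hCS := intervalIntegral.sq_integral_mul_le_integral_sq_mul_integral_sq hL.le
    ((hg.pow 2).intervalIntegrable_of_Icc hL.le) ((hzc.pow 2).intervalIntegrable_of_Icc hL.le)
    ((hg.mul hzc).intervalIntegrable_of_Icc hL.le)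
  exact mul_sqrt_le_sqrt_of_mul_le_of_sq_le_mul hlam.le
    (intervalIntegral.integral_nonneg hL.le fun x _ => sq_nonneg _)
    (mul_integral_sq_le_integral_mul_of_kdv_resolvent hL.le hz₁ hz₂ hz₃ hz₃cont hbc0 hbcL hbc1 heq)
    hCS
end

section
/- Let L > 0, λ̃ ≥ 0 and let g : [0,L] → ℝ be continuous. If z : ℝ → ℝ is three times continuously differentiable on [0,L], satisfies z(0) = z(L) = 0 and z′(L) = 0, and satisfies λ̃·z(x) + z″′(x) + z′(x) = g(x) for all x ∈ [0,L], then (3/2) ∫₀^L z′(x)² dx ≤ ∫₀^L z(x)² dx + (L²/2) ∫₀^L g(x)² dx. -/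
/-!
Multiply the equation by `x z(x)` and integrate over `[0,L]`. Integrating by parts, with the
boundary terms killed by `z(0) = z(L) = z′(L) = 0`, gives
`∫ x z (z‴ + z′) + z²/2 = (3/2) ∫ z′²`, hence `(3/2) ∫ z′² = ∫ x z g − λ̃ x z² + z²/2`.
The `λ̃` term is nonpositive and `x z g ≤ z²/2 + L² g²/2` on `[0,L]`.
-/

open Set MeasureTheory intervalIntegral

noncomputable def multiplierFlux (z z₁ z₂ : ℝ → ℝ) (x : ℝ) : ℝ :=
  x * z x * z₂ x - z x * z₁ x - x * z₁ x ^ 2 / 2 + x * z x ^ 2 / 2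

theorem hasDerivWithinAt_multiplierFlux {z z₁ z₂ z₃ : ℝ → ℝ} {s : Set ℝ} {x : ℝ}
    (h₁ : HasDerivWithinAt z (z₁ x) s x) (h₂ : HasDerivWithinAt z₁ (z₂ x) s x)
    (h₃ : HasDerivWithinAt z₂ (z₃ x) s x) :
    HasDerivWithinAt (multiplierFlux z z₁ z₂)
      (x * z x * (z₃ x + z₁ x) - 3 / 2 * z₁ x ^ 2 + z x ^ 2 / 2) s x := by
  have hid : HasDerivWithinAt (fun y : ℝ => y) 1 s x := hasDerivWithinAt_id x s
  refine ((((hid.mul h₁).mul h₃).sub (h₁.mul h₂)).sub ((hid.mul (h₂.pow 2)).div_const 2)).add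
    ((hid.mul (h₁.pow 2)).div_const 2) |>.congr_deriv ?_
  simp only [Pi.mul_apply, Pi.pow_apply]
  push_cast
  ring

theorem integral_multiplier_identity {L : ℝ} (hL : 0 ≤ L) {z z₁ z₂ z₃ : ℝ → ℝ}
    (hz₁ : ∀ x ∈ Icc 0 L, HasDerivWithinAt z (z₁ x) (Icc 0 L) x)
    (hz₂ : ∀ x ∈ Icc 0 L, HasDerivWithinAt z₁ (z₂ x) (Icc 0 L) x)
    (hz₃ : ∀ x ∈ Icc 0 L, HasDerivWithinAt z₂ (z₃ x) (Icc 0 L) x)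
    (hz₃c : ContinuousOn z₃ (Icc 0 L)) (h0 : z 0 = 0) (hL0 : z L = 0) (hL1 : z₁ L = 0) :
    ∫ x in 0..L, (x * z x * (z₃ x + z₁ x) + z x ^ 2 / 2) = 3 / 2 * ∫ x in 0..L, z₁ x ^ 2 := by
  have hzc : ContinuousOn z (Icc 0 L) := fun x hx => (hz₁ x hx).continuousWithinAt
  have hz₁c : ContinuousOn z₁ (Icc 0 L) := fun x hx => (hz₂ x hx).continuousWithinAt
  have hflux := fun x hx => hasDerivWithinAt_multiplierFlux (hz₁ x hx) (hz₂ x hx) (hz₃ x hx)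
  have hftc : ∫ x in 0..L, (x * z x * (z₃ x + z₁ x) - 3 / 2 * z₁ x ^ 2 + z x ^ 2 / 2) =
      multiplierFlux z z₁ z₂ L - multiplierFlux z z₁ z₂ 0 :=
    integral_eq_sub_of_hasDerivAt_of_le hL (fun x hx => (hflux x hx).continuousWithinAt)
      (fun x hx => (hflux x (Ioo_subset_Icc_self hx)).hasDerivAt (Icc_mem_nhds hx.1 hx.2))
      (ContinuousOn.intervalIntegrable_of_Icc hL (by fun_prop))
  have hlhs : IntervalIntegrable (fun x => x * z x * (z₃ x + z₁ x) + z x ^ 2 / 2) volume 0 L :=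
    ContinuousOn.intervalIntegrable_of_Icc hL (by fun_prop)
  have hz₁sq : IntervalIntegrable (fun x => 3 / 2 * z₁ x ^ 2) volume 0 L :=
    ContinuousOn.intervalIntegrable_of_Icc hL (by fun_prop)
  rw [← intervalIntegral.integral_const_mul, ← sub_eq_zero, ← integral_sub hlhs hz₁sq]
  simpa [multiplierFlux, h0, hL0, hL1, add_sub_right_comm] using hftc

/-- If `z` is three times continuously differentiable on `[0,L]`, satisfies
`z(0) = z(L) = z′(L) = 0` and `λ̃ z + z″′ + z′ = g` on `[0,L]` with `g`
continuous and `λ̃ ≥ 0`, then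
`(3/2) ∫₀^L (z′)² ≤ ∫₀^L z² + (L²/2) ∫₀^L g²`. -/
theorem kdv_resolvent_H1_bound (L lam : ℝ) (hL : 0 < L) (hlam : 0 ≤ lam)
    (g : ℝ → ℝ) (hg : ContinuousOn g (Set.Icc 0 L))
    (z z₁ z₂ z₃ : ℝ → ℝ)
    (hz₁ : ∀ x ∈ Set.Icc (0:ℝ) L, HasDerivWithinAt z (z₁ x) (Set.Icc 0 L) x)
    (hz₂ : ∀ x ∈ Set.Icc (0:ℝ) L, HasDerivWithinAt z₁ (z₂ x) (Set.Icc 0 L) x)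
    (hz₃ : ∀ x ∈ Set.Icc (0:ℝ) L, HasDerivWithinAt z₂ (z₃ x) (Set.Icc 0 L) x)
    (hz₃cont : ContinuousOn z₃ (Set.Icc 0 L))
    (hbc0 : z 0 = 0) (hbcL : z L = 0) (hbc1 : z₁ L = 0)
    (heq : ∀ x ∈ Set.Icc (0:ℝ) L, lam * z x + z₃ x + z₁ x = g x) :
    (3/2) * ∫ x in (0:ℝ)..L, (z₁ x)^2
      ≤ (∫ x in (0:ℝ)..L, (z x)^2) + (L^2/2) * ∫ x in (0:ℝ)..L, (g x)^2 := by
  have hzc : ContinuousOn z (Icc 0 L) := fun x hx => (hz₁ x hx).continuousWithinAt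
  have hzsq : IntervalIntegrable (fun x => z x ^ 2) volume 0 L :=
    ContinuousOn.intervalIntegrable_of_Icc hL.le (by fun_prop)
  have hgsq : IntervalIntegrable (fun x => L ^ 2 / 2 * g x ^ 2) volume 0 L :=
    ContinuousOn.intervalIntegrable_of_Icc hL.le (by fun_prop)
  have hlhs : IntervalIntegrable (fun x => x * z x * g x - lam * x * z x ^ 2 + z x ^ 2 / 2)
      volume 0 L :=
    ContinuousOn.intervalIntegrable_of_Icc hL.le (by fun_prop)
  calc 3 / 2 * ∫ x in 0..L, z₁ x ^ 2
      = ∫ x in 0..L, (x * z x * (z₃ x + z₁ x) + z x ^ 2 / 2) :=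
        (integral_multiplier_identity hL.le hz₁ hz₂ hz₃ hz₃cont hbc0 hbcL hbc1).symm
    _ = ∫ x in 0..L, (x * z x * g x - lam * x * z x ^ 2 + z x ^ 2 / 2) := by
        refine integral_congr fun x hx => ?_
        rw [uIcc_of_le hL.le] at hx
        simp only [← heq x hx]
        ring
    _ ≤ ∫ x in 0..L, (z x ^ 2 + L ^ 2 / 2 * g x ^ 2) := by
        refine integral_mono_on hL.le hlhs (hzsq.add hgsq) fun x ⟨hx0, hxL⟩ => ?_
        nlinarith [sq_nonneg (x * g x - z x), mul_nonneg (mul_nonneg hlam hx0) (sq_nonneg (z x)),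
          mul_nonneg (mul_nonneg (sub_nonneg.2 hxL) (add_nonneg hx0 hL.le)) (sq_nonneg (g x))]
    _ = (∫ x in 0..L, z x ^ 2) + L ^ 2 / 2 * ∫ x in 0..L, g x ^ 2 := by
        rw [integral_add hzsq hgsq, intervalIntegral.integral_const_mul]
end

section
/- Let L > 0 and let u : ℝ → ℝ be three times continuously differentiable on [0,L] with u(0) = u(L) = 0 and u′(L) = 0. Then ∫₀^L u′(x)² dx ≤ 2 ∫₀^L (u′(x) + u″′(x))² dx + (8L²/5) ∫₀^L u(x)² dx. -/
/-!
Integrating `x u (u′ + u‴)` by parts gives `3 ∫ u′² = ∫ u² + 2 ∫ x u (u′ + u‴)`, and integrating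
`x u u′` by parts gives `∫ u² = -2 ∫ x u u′`, whence the Poincaré-type bound `∫ u² ≤ 4 L² ∫ u′²`.
The cross term `∫ x u (u′ + u‴)` is bounded by a weighted Young inequality; for `L² ≤ 3/10` the
Poincaré bound absorbs the `∫ u²` term, for `L² > 3/10` it is dominated by `L² ∫ u²` directly.
-/

open Set intervalIntegral

theorem integral_eq_sub_of_hasDerivWithinAt_Icc {E : Type*} [NormedAddCommGroup E]
    [NormedSpace ℝ E] [CompleteSpace E] {a b : ℝ} (hab : a ≤ b) {F f : ℝ → E}
    (hF : ∀ x ∈ Icc a b, HasDerivWithinAt F (f x) (Icc a b) x)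
    (hf : ContinuousOn f (Icc a b)) :
    ∫ x in a..b, f x = F b - F a := by
  refine integral_eq_sub_of_hasDeriv_right_of_le hab
    (fun x hx => (hF x hx).continuousWithinAt) (fun x hx => ?_) (hf.intervalIntegrable_of_Icc hab)
  exact (hF x (Ioo_subset_Icc_self hx)).mono_of_mem_nhdsWithin
    (Icc_mem_nhdsGT_of_mem ⟨hx.1.le, hx.2⟩)

theorem four_mul_integral_id_mul_mul_le {L : ℝ} (hL : 0 ≤ L) (a : ℝ) {f g : ℝ → ℝ}
    (hf : ContinuousOn f (Icc 0 L)) (hg : ContinuousOn g (Icc 0 L)) :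
    4 * a * ∫ x in (0:ℝ)..L, x * f x * g x
      ≤ 4 * a ^ 2 * (∫ x in (0:ℝ)..L, g x ^ 2) + L ^ 2 * ∫ x in (0:ℝ)..L, f x ^ 2 := by
  have hint : ∀ {h : ℝ → ℝ}, ContinuousOn h (Icc 0 L) →
      IntervalIntegrable h MeasureTheory.volume 0 L :=
    fun h => h.intervalIntegrable_of_Icc hL
  rw [← integral_const_mul, ← integral_const_mul, ← integral_const_mul,
    ← integral_add (hint (by fun_prop)) (hint (by fun_prop))]
  refine integral_mono_on hL (hint (by fun_prop)) (hint (by fun_prop)) fun x ⟨hx0, hxL⟩ => ?_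
  have hxf : x ^ 2 * f x ^ 2 ≤ L ^ 2 * f x ^ 2 := by gcongr
  nlinarith [sq_nonneg (2 * a * g x - x * f x)]

theorem integral_sq_le_of_eq_zero_right {L : ℝ} (hL : 0 < L) {u u₁ : ℝ → ℝ}
    (hu : ∀ x ∈ Icc 0 L, HasDerivWithinAt u (u₁ x) (Icc 0 L) x)
    (hu₁ : ContinuousOn u₁ (Icc 0 L)) (huL : u L = 0) :
    ∫ x in (0:ℝ)..L, u x ^ 2 ≤ 4 * L ^ 2 * ∫ x in (0:ℝ)..L, u₁ x ^ 2 := by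
  have hcu : ContinuousOn u (Icc 0 L) := fun x hx => (hu x hx).continuousWithinAt
  have hint : ∀ {h : ℝ → ℝ}, ContinuousOn h (Icc 0 L) →
      IntervalIntegrable h MeasureTheory.volume 0 L :=
    fun h => h.intervalIntegrable_of_Icc hL.le
  have hderiv : ∀ x ∈ Icc 0 L, HasDerivWithinAt (fun y => y * u y ^ 2)
      (u x ^ 2 + 2 * (x * u x * u₁ x)) (Icc 0 L) x := fun x hx => by
    refine ((hasDerivAt_id' x).hasDerivWithinAt.fun_mul ((hu x hx).fun_pow 2)).congr_deriv ?_
    push_cast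
    ring
  have hparts : ∫ x in (0:ℝ)..L, u x ^ 2 = -2 * ∫ x in (0:ℝ)..L, x * u x * u₁ x := by
    have h := integral_eq_sub_of_hasDerivWithinAt_Icc hL.le hderiv (by fun_prop)
    rw [integral_add (hint (by fun_prop)) (hint (by fun_prop)), integral_const_mul, huL] at h
    linarith
  have hyoung := four_mul_integral_id_mul_mul_le hL.le (L ^ 2) hcu hu₁.neg
  simp only [Pi.neg_apply, mul_neg, integral_neg, neg_sq] at hyoung
  refine le_of_mul_le_mul_left ?_ (by positivity : 0 < L ^ 2)
  rw [hparts] at hyoung ⊢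
  linarith

theorem kdv_energy_identity {L : ℝ} (hL : 0 ≤ L) {u u₁ u₂ u₃ : ℝ → ℝ}
    (hu₁ : ∀ x ∈ Icc 0 L, HasDerivWithinAt u (u₁ x) (Icc 0 L) x)
    (hu₂ : ∀ x ∈ Icc 0 L, HasDerivWithinAt u₁ (u₂ x) (Icc 0 L) x)
    (hu₃ : ∀ x ∈ Icc 0 L, HasDerivWithinAt u₂ (u₃ x) (Icc 0 L) x)
    (hu₃cont : ContinuousOn u₃ (Icc 0 L))
    (hbc0 : u 0 = 0) (hbcL : u L = 0) (hbc1 : u₁ L = 0) :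
    3 * ∫ x in (0:ℝ)..L, u₁ x ^ 2
      = (∫ x in (0:ℝ)..L, u x ^ 2) + 2 * ∫ x in (0:ℝ)..L, x * u x * (u₁ x + u₃ x) := by
  have hcu : ContinuousOn u (Icc 0 L) := fun x hx => (hu₁ x hx).continuousWithinAt
  have hcu₁ : ContinuousOn u₁ (Icc 0 L) := fun x hx => (hu₂ x hx).continuousWithinAt
  have hint : ∀ {h : ℝ → ℝ}, ContinuousOn h (Icc 0 L) →
      IntervalIntegrable h MeasureTheory.volume 0 L :=
    fun h => h.intervalIntegrable_of_Icc hL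
  have hderiv : ∀ x ∈ Icc 0 L, HasDerivWithinAt
      (fun y => y * u y ^ 2 / 2 + y * u y * u₂ y - u y * u₁ y - y * u₁ y ^ 2 / 2)
      (u x ^ 2 / 2 + x * u x * (u₁ x + u₃ x) - 3 / 2 * u₁ x ^ 2) (Icc 0 L) x := fun x hx => by
    have hid : HasDerivWithinAt (fun y : ℝ => y) 1 (Icc 0 L) x :=
      (hasDerivAt_id' x).hasDerivWithinAt
    have h₁ := hu₁ x hx
    have h₂ := hu₂ x hx
    refine (((((hid.fun_mul (h₁.fun_pow 2)).div_const 2).add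
      ((hid.fun_mul h₁).fun_mul (hu₃ x hx))).sub (h₁.fun_mul h₂)).sub
      ((hid.fun_mul (h₂.fun_pow 2)).div_const 2)).congr_deriv ?_
    push_cast
    ring
  have h := integral_eq_sub_of_hasDerivWithinAt_Icc hL hderiv (by fun_prop)
  rw [integral_sub (hint (by fun_prop)) (hint (by fun_prop)),
    integral_add (hint (by fun_prop)) (hint (by fun_prop)), integral_div, integral_const_mul,
    hbc0, hbcL, hbc1] at h
  linarith

/-- If `u` is three times continuously differentiable on `[0,L]` with
`u(0) = u(L) = u′(L) = 0`, then
`∫₀^L (u′)² ≤ 2 ∫₀^L (u′ + u″′)² + (8L²/5) ∫₀^L u²`. -/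
theorem kdv_graph_norm_H1_bound (L : ℝ) (hL : 0 < L) (u u₁ u₂ u₃ : ℝ → ℝ)
    (hu₁ : ∀ x ∈ Set.Icc (0:ℝ) L, HasDerivWithinAt u (u₁ x) (Set.Icc 0 L) x)
    (hu₂ : ∀ x ∈ Set.Icc (0:ℝ) L, HasDerivWithinAt u₁ (u₂ x) (Set.Icc 0 L) x)
    (hu₃ : ∀ x ∈ Set.Icc (0:ℝ) L, HasDerivWithinAt u₂ (u₃ x) (Set.Icc 0 L) x)
    (hu₃cont : ContinuousOn u₃ (Set.Icc 0 L))
    (hbc0 : u 0 = 0) (hbcL : u L = 0) (hbc1 : u₁ L = 0) :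
    ∫ x in (0:ℝ)..L, (u₁ x)^2
      ≤ 2 * (∫ x in (0:ℝ)..L, (u₁ x + u₃ x)^2)
        + (8 * L^2 / 5) * ∫ x in (0:ℝ)..L, (u x)^2 := by
  have hcu : ContinuousOn u (Icc 0 L) := fun x hx => (hu₁ x hx).continuousWithinAt
  have hcu₁ : ContinuousOn u₁ (Icc 0 L) := fun x hx => (hu₂ x hx).continuousWithinAt
  have henergy := kdv_energy_identity hL.le hu₁ hu₂ hu₃ hu₃cont hbc0 hbcL hbc1
  have hpoincare := integral_sq_le_of_eq_zero_right hL hu₁ hcu₁ hbcL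
  have hyoung (a : ℝ) := four_mul_integral_id_mul_mul_le hL.le a hcu (hcu₁.add hu₃cont)
  simp only [Pi.add_apply] at hyoung
  have hA : 0 ≤ ∫ x in (0:ℝ)..L, u₁ x ^ 2 := integral_nonneg hL.le fun x _ => sq_nonneg _
  have hB : 0 ≤ ∫ x in (0:ℝ)..L, u x ^ 2 := integral_nonneg hL.le fun x _ => sq_nonneg _
  have hLB : 0 ≤ L ^ 2 * ∫ x in (0:ℝ)..L, u x ^ 2 := by positivity
  rcases le_or_gt (L ^ 2) (3 / 10) with hsmall | hlarge
  · have hLA := mul_le_mul_of_nonneg_right hsmall hA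
    linarith [hyoung (9 / 5)]
  · have hBL := mul_le_mul_of_nonneg_right hlarge.le hB
    linarith [hyoung 3]
end
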